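/- arXiv:2411.10378 — 2 statements merged into one kernel-verified Lean document; each statement's English description precedes it below -/
import Mathlib

section
/- Let $f : \mathbb{R}^n \to \mathbb{R}$ be continuously differentiable with $L_g$-Lipschitz gradient. Let $\hat{x} \in \mathbb{R}^n$, $\hat{\theta} \in [0,1)$, and let $\hat{g} \in \mathbb{R}^n$ satisfy $\|\nabla f(\hat{x}) - \hat{g}\|_2 \leq \hat{\theta}\|\hat{g}\|_2$. If $0 < \alpha \leq \frac{(1-\hat{\theta})^2}{L_g(1+\hat{\theta})}$, then $f(\hat{x} - \alpha \hat{g}) \leq f(\hat{x}) - \frac{\alpha}{2(1+\hat{\theta})}\|\nabla f(\hat{x})\|_2^2$. -/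
/-!
By the descent lemma, `f (x̂ - α ĝ) ≤ f x̂ - α ⟪∇f x̂, ĝ⟫ + Lg α² ‖ĝ‖² / 2`. Squaring the
relative-error condition gives `2 ⟪∇f x̂, ĝ⟫ ≥ ‖∇f x̂‖² + (1 - θ²) ‖ĝ‖²`, and the step-size bound
gives `Lg α ≤ 1 - θ²`, so the `‖ĝ‖²` terms cancel and a decrease of `α ‖∇f x̂‖² / 2` remains.
-/

open InnerProductSpace
open scoped Gradient

section Descent

variable {E : Type*} [NormedAddCommGroup E] [InnerProductSpace ℝ E] [CompleteSpace E]
  {f : E → ℝ}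

theorem hasDerivAt_comp_add_smul {x v : E} {t : ℝ} (hf : DifferentiableAt ℝ f (x + t • v)) :
    HasDerivAt (fun s : ℝ => f (x + s • v)) ⟪∇ f (x + t • v), v⟫_ℝ t := by
  have hline : HasDerivAt (fun s : ℝ => x + s • v) v t := by
    simpa using ((hasDerivAt_id t).smul_const v).const_add x
  have := hf.hasGradientAt.hasFDerivAt.comp_hasDerivAt t hline
  rwa [toDual_apply_apply] at this

theorem abs_sub_sub_inner_gradient_le {L : ℝ} (hf : Differentiable ℝ f)
    (hlip : ∀ x y, ‖∇ f x - ∇ f y‖ ≤ L * ‖x - y‖) (x v : E) :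
    |f (x + v) - f x - ⟪∇ f x, v⟫_ℝ| ≤ L / 2 * ‖v‖ ^ 2 := by
  set h : ℝ → ℝ := fun t => f (x + t • v) - f x - t * ⟪∇ f x, v⟫_ℝ
  have hderiv (t : ℝ) : HasDerivAt h (⟪∇ f (x + t • v), v⟫_ℝ - ⟪∇ f x, v⟫_ℝ) t :=
    ((hasDerivAt_comp_add_smul (hf _)).sub_const _).sub (by simpa using (hasDerivAt_mul_const _))
  have hbound (t : ℝ) (ht : t ∈ Set.Ico (0 : ℝ) 1) :
      ‖⟪∇ f (x + t • v), v⟫_ℝ - ⟪∇ f x, v⟫_ℝ‖ ≤ L * ‖v‖ ^ 2 * t := by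
    rw [← inner_sub_left, Real.norm_eq_abs]
    calc |⟪∇ f (x + t • v) - ∇ f x, v⟫_ℝ| ≤ ‖∇ f (x + t • v) - ∇ f x‖ * ‖v‖ :=
          abs_real_inner_le_norm _ _
      _ ≤ L * ‖t • v‖ * ‖v‖ := by
          gcongr
          simpa using hlip (x + t • v) x
      _ = L * ‖v‖ ^ 2 * t := by
          rw [norm_smul, Real.norm_of_nonneg ht.1]
          ring
  have hB (t : ℝ) : HasDerivAt (fun s => L / 2 * ‖v‖ ^ 2 * s ^ 2) (L * ‖v‖ ^ 2 * t) t := by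
    refine ((hasDerivAt_pow 2 t).const_mul (L / 2 * ‖v‖ ^ 2)).congr_deriv ?_
    push_cast
    ring
  have := image_norm_le_of_norm_deriv_right_le_deriv_boundary
    (fun t _ => (hderiv t).continuousAt.continuousWithinAt)
    (fun t _ => (hderiv t).hasDerivWithinAt) (by simp [h]) hB hbound
    (Set.right_mem_Icc.2 zero_le_one)
  simpa [h] using this

end Descent

theorem norm_sq_add_le_two_inner_of_norm_sub_le {E : Type*} [NormedAddCommGroup E]
    [InnerProductSpace ℝ E] {a b : E} {θ : ℝ} (h : ‖a - b‖ ≤ θ * ‖b‖) :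
    ‖a‖ ^ 2 + (1 - θ ^ 2) * ‖b‖ ^ 2 ≤ 2 * ⟪a, b⟫_ℝ := by
  have hsq : ‖a - b‖ ^ 2 ≤ (θ * ‖b‖) ^ 2 := pow_le_pow_left₀ (norm_nonneg _) h 2
  rw [norm_sub_sq_real] at hsq
  linarith

theorem mul_le_one_sub_sq_of_le_div {L θ α : ℝ} (hL : 0 < L) (hθ0 : 0 ≤ θ) (hθ1 : θ ≤ 1)
    (hα : α ≤ (1 - θ) ^ 2 / (L * (1 + θ))) : L * α ≤ 1 - θ ^ 2 := by
  rw [le_div_iff₀ (by positivity)] at hα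
  have : (1 - θ) ^ 2 ≤ (1 - θ ^ 2) * (1 + θ) := by nlinarith [mul_nonneg hθ0 (sub_nonneg.2 hθ1)]
  nlinarith

theorem inexact_gradient_descent_step {n : ℕ} (f : EuclideanSpace ℝ (Fin n) → ℝ)
    (Lg : ℝ) (hLg : 0 < Lg) (hf : ContDiff ℝ 1 f)
    (hlip : ∀ x y, ‖gradient f x - gradient f y‖ ≤ Lg * ‖x - y‖)
    (xhat ghat : EuclideanSpace ℝ (Fin n)) (θ α : ℝ) (hθ0 : 0 ≤ θ) (hθ1 : θ < 1)
    (hnorm : ‖gradient f xhat - ghat‖ ≤ θ * ‖ghat‖)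
    (hα0 : 0 < α) (hα : α ≤ (1 - θ) ^ 2 / (Lg * (1 + θ))) :
    f (xhat - α • ghat) ≤ f xhat - α / (2 * (1 + θ)) * ‖gradient f xhat‖ ^ 2 := by
  have hdescent := (abs_le.1 (abs_sub_sub_inner_gradient_le (hf.differentiable one_ne_zero)
    hlip xhat (-(α • ghat)))).2
  rw [← sub_eq_add_neg, inner_neg_right, real_inner_smul_right, norm_neg, norm_smul,
    Real.norm_of_nonneg hα0.le] at hdescent
  have hinner := norm_sq_add_le_two_inner_of_norm_sub_le hnorm
  have hstep := mul_le_one_sub_sq_of_le_div hLg hθ0 hθ1.le hα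
  calc f (xhat - α • ghat)
      ≤ f xhat - α * ⟪∇ f xhat, ghat⟫_ℝ + Lg / 2 * (α * ‖ghat‖) ^ 2 := by linarith
    _ ≤ f xhat - α / 2 * ‖∇ f xhat‖ ^ 2 := by
        nlinarith [mul_le_mul_of_nonneg_left hinner hα0.le,
          mul_le_mul_of_nonneg_right hstep (by positivity : 0 ≤ α * ‖ghat‖ ^ 2)]
    _ ≤ f xhat - α / (2 * (1 + θ)) * ‖∇ f xhat‖ ^ 2 := by
        gcongr
        linarith
end

section
/- Let $q, g \in \mathbb{R}^n$ and define $p = q$ if $g^{\mathsf{T}} q \leq 0$ and $p = -q$ otherwise. If additionally $|( g - v)^{\mathsf{T}} q| \leq \theta |g^{\mathsf{T}} q|$ for some $v \in \mathbb{R}^n$ and $\theta \in [0,1)$, then $v^{\mathsf{T}} p \leq 0$. -/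
open RealInnerProductSpace

theorem sign_selection_nonascent {n : ℕ} (q g v : EuclideanSpace ℝ (Fin n)) (θ : ℝ)
    (hθ0 : 0 ≤ θ) (hθ1 : θ < 1)
    (p : EuclideanSpace ℝ (Fin n))
    (hp : p = if ⟪g, q⟫ ≤ 0 then q else -q)
    (hacc : |⟪g - v, q⟫| ≤ θ * |⟪g, q⟫|) :
    ⟪v, p⟫ ≤ 0 := by
  have hsub : ⟪g - v, q⟫ = ⟪g, q⟫ - ⟪v, q⟫ := by
    simp [inner_sub_left]
  have hle := (abs_le.mp hacc).1
  have hge := (abs_le.mp hacc).2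
  rw [hsub] at hle hge
  split_ifs at hp with h
  · rw [hp]
    have habs : |⟪g, q⟫| = -⟪g, q⟫ := abs_of_nonpos h
    nlinarith
  · push_neg at h
    rw [hp, inner_neg_right]
    have habs : |⟪g, q⟫| = ⟪g, q⟫ := abs_of_pos h
    nlinarith
end
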